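/- arXiv:0811.0468 — 5 statements merged into one kernel-verified Lean document; each statement's English description precedes it below -/
import Mathlib

section
/- For any game ν on N and any Borel measurable function h : ℝ → ℝ such that h(Y_ν) is integrable, one has E[h(Y_ν)] = (1/n!) · Σ_{σ ∈ 𝔖_n} E[h(Y_ν^σ)]. -/
/-! Almost surely the `X i` are pairwise distinct; then `sortDesc x` is the unique `ρ` with `x ∘ ρ`
strictly decreasing, and rearranging `x` by `sortDesc x * σ⁻¹` produces a vector sorted by `σ`
with the same order statistics, so `Y_ν^σ = C_ν(x ∘ (sortDesc x * σ⁻¹))`. For fixed `x`,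
`σ ↦ sortDesc x * σ⁻¹` is a bijection of `𝔖_n`, hence `∑_σ h(Y_ν^σ) = ∑_τ h(C_ν(x ∘ τ))`, and every
term on the right has the law of `h(C_ν(x))` because the law of an i.i.d. vector is invariant under
permutations of its coordinates. -/

open MeasureTheory ProbabilityTheory Finset

noncomputable section

namespace ChoquetPaper

variable {n : ℕ} {Ω : Type*}

/-- `ν_i^σ := ν({σ(1),…,σ(i)})` (here `i : ℕ`, `0 ≤ i ≤ n`). -/
def nuSig (ν : Finset (Fin n) → ℝ) (σ : Equiv.Perm (Fin n)) (i : ℕ) : ℝ :=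
  ν ((Finset.univ.filter (fun j : Fin n => (j : ℕ) < i)).image σ)

/-- The Choquet sum `Σ_{i=1}^n p_i^{ν,σ} x_{σ(i)}` w.r.t. a fixed permutation `σ`. -/
def choquetPerm (ν : Finset (Fin n) → ℝ) (σ : Equiv.Perm (Fin n)) (x : Fin n → ℝ) : ℝ :=
  ∑ i : Fin n, (nuSig ν σ ((i : ℕ) + 1) - nuSig ν σ (i : ℕ)) * x (σ i)

/-- A permutation `σ` such that `x_{σ(1)} ≥ ⋯ ≥ x_{σ(n)}`. -/
def sortDesc (x : Fin n → ℝ) : Equiv.Perm (Fin n) :=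
  (Fin.revPerm).trans (Tuple.sort x)

/-- The discrete Choquet integral `C_ν(x)`. -/
def choquet (ν : Finset (Fin n) → ℝ) (x : Fin n → ℝ) : ℝ :=
  choquetPerm ν (sortDesc x) x

/-- The `i`-th order statistic `X_{i:n}` (1-based), with the convention `X_{0:n} := 0`. -/
def orderStat (X : Fin n → Ω → ℝ) (i : ℕ) (ω : Ω) : ℝ :=
  if h : i - 1 < n ∧ 1 ≤ i then X (Tuple.sort (fun j => X j ω) ⟨i - 1, h.1⟩) ω else 0

/-- `Y_ν^σ := Σ_{i=1}^n p_i^{ν,σ} X_{n−i+1:n}`. -/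
def Ysig (ν : Finset (Fin n) → ℝ) (σ : Equiv.Perm (Fin n)) (X : Fin n → Ω → ℝ) (ω : Ω) : ℝ :=
  ∑ i : Fin n, (nuSig ν σ ((i : ℕ) + 1) - nuSig ν σ (i : ℕ)) * orderStat X (n - (i : ℕ)) ω

/-- plus truncated power function -/
def tpowPos (t : ℝ) (m : ℕ) : ℝ := if 0 < t then t ^ m else 0

/-- minus truncated power function -/
def tpowNeg (t : ℝ) (m : ℕ) : ℝ := if t < 0 then t ^ m else 0

/-- divided difference at pairwise distinct points indexed by a finite set -/
def ddiff {ι : Type*} [DecidableEq ι] (g : ℝ → ℝ) (s : Finset ι) (a : ι → ℝ) : ℝ :=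
  ∑ i ∈ s, g (a i) / ∏ j ∈ s.erase i, (a i - a j)

end ChoquetPaper

theorem measurable_of_measurableSet_fiber {α γ κ : Type*} [MeasurableSpace α]
    [MeasurableSpace γ] [Countable κ] {r : α → κ} (hr : ∀ k, MeasurableSet {a | r a = k})
    {g : κ → α → γ} (hg : ∀ k, Measurable (g k)) :
    Measurable fun a => g (r a) a := fun s hs => by
  have : (fun a => g (r a) a) ⁻¹' s = ⋃ k, {a | r a = k} ∩ g k ⁻¹' s := by
    ext a; simp
  rw [this]
  exact .iUnion fun k => (hr k).inter (hg k hs)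

theorem measurable_comp_mul_inv {β ι : Type*} [MeasurableSpace β] [Finite ι]
    {r : (ι → β) → Equiv.Perm ι} (hr : ∀ ρ, MeasurableSet {y | r y = ρ}) (σ : Equiv.Perm ι) :
    Measurable fun y : ι → β => y ∘ ⇑(r y * σ⁻¹) :=
  measurable_of_measurableSet_fiber (g := fun ρ y => y ∘ ⇑(ρ * σ⁻¹)) hr fun ρ => by fun_prop

namespace MeasureTheory

variable {β ι E : Type*} [MeasurableSpace β] [Fintype ι] [DecidableEq ι]
  [NormedAddCommGroup E] [NormedSpace ℝ E]

theorem sum_integral_comp_mul_inv {π : Measure (ι → β)}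
    (hπ : ∀ τ : Equiv.Perm ι, MeasurePreserving (· ∘ ⇑τ) π π) {r : (ι → β) → Equiv.Perm ι}
    (hr : ∀ ρ, MeasurableSet {y | r y = ρ}) {F : (ι → β) → E} (hFm : StronglyMeasurable F)
    (hF : Integrable F π) :
    ∑ σ : Equiv.Perm ι, ∫ y, F (y ∘ ⇑(r y * σ⁻¹)) ∂π
      = (Fintype.card ι).factorial • ∫ y, F y ∂π := by
  have hFτ : ∀ τ : Equiv.Perm ι, Integrable (fun y => F (y ∘ ⇑τ)) π := fun τ =>
    (hπ τ).integrable_comp_of_integrable hF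
  have hreindex : ∀ y : ι → β,
      ∑ σ : Equiv.Perm ι, F (y ∘ ⇑(r y * σ⁻¹)) = ∑ τ : Equiv.Perm ι, F (y ∘ ⇑τ) :=
    fun y => Equiv.sum_comp ((Equiv.inv _).trans (Equiv.mulLeft (r y))) fun τ => F (y ∘ ⇑τ)
  have hFσ : ∀ σ : Equiv.Perm ι, Integrable (fun y => F (y ∘ ⇑(r y * σ⁻¹))) π := fun σ =>
    (integrable_finsetSum _ fun τ _ => (hFτ τ).norm).mono'
      (hFm.comp_measurable (measurable_comp_mul_inv hr σ)).aestronglyMeasurable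
      (.of_forall fun y => by
        simpa using Finset.single_le_sum (f := fun τ : Equiv.Perm ι => ‖F (y ∘ ⇑τ)‖)
          (fun τ _ => norm_nonneg _) (Finset.mem_univ (r y * σ⁻¹)))
  calc ∑ σ : Equiv.Perm ι, ∫ y, F (y ∘ ⇑(r y * σ⁻¹)) ∂π
      = ∑ τ : Equiv.Perm ι, ∫ y, F (y ∘ ⇑τ) ∂π := by
        rw [← integral_finsetSum _ fun σ _ => hFσ σ, ← integral_finsetSum _ fun τ _ => hFτ τ]
        simp_rw [hreindex]
    _ = ∑ _τ : Equiv.Perm ι, ∫ y, F y ∂π :=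
        Finset.sum_congr rfl fun τ _ => by
          rw [← integral_map (hπ τ).aemeasurable hFm.aestronglyMeasurable, (hπ τ).map_eq]
    _ = (Fintype.card ι).factorial • ∫ y, F y ∂π := by
        rw [Finset.sum_const, Finset.card_univ, Fintype.card_perm]

end MeasureTheory

namespace ProbabilityTheory

variable {Ω ι β : Type*} [MeasurableSpace Ω] [MeasurableSpace β] {P : Measure Ω}

theorem iIndepFun.measurePreserving_comp_perm [Fintype ι] [IsProbabilityMeasure P]
    {X : ι → Ω → β} (hX : ∀ i, Measurable (X i)) (hind : iIndepFun X P) {μ : Measure β}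
    (hdist : ∀ i, P.map (X i) = μ) (τ : Equiv.Perm ι) :
    MeasurePreserving (· ∘ ⇑τ) (P.map fun ω i => X i ω) (P.map fun ω i => X i ω) := by
  rw [hind.map_fun_eq_pi_map fun i => (hX i).aemeasurable]
  have h := measurePreserving_piCongrLeft (fun i => P.map (X i)) τ.symm
  have hpi : (Measure.pi fun i => P.map (X (τ.symm i))) = Measure.pi fun i => P.map (X i) := by
    congr 1; ext1 i; rw [hdist, hdist]
  rw [hpi] at h
  convert h using 1
  ext y i
  simp [MeasurableEquiv.coe_piCongrLeft, Equiv.piCongrLeft_apply]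

theorem IndepFun.measure_setOf_eq_eq_zero {X Y : Ω → ℝ} [IsFiniteMeasure P] (hX : Measurable X)
    (hY : Measurable Y) (hXY : IndepFun X Y P) [NullSingletonClass (P.map Y)] :
    P {ω | X ω = Y ω} = 0 := by
  have hdiag : MeasurableSet {p : ℝ × ℝ | p.1 = p.2} :=
    measurableSet_eq_fun measurable_fst measurable_snd
  rw [show {ω | X ω = Y ω} = (fun ω => (X ω, Y ω)) ⁻¹' {p : ℝ × ℝ | p.1 = p.2} from rfl,
    ← Measure.map_apply (hX.prodMk hY) hdiag,
    (indepFun_iff_map_prod_eq_prod_map_map hX.aemeasurable hY.aemeasurable).1 hXY,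
    Measure.prod_apply hdiag]
  simp

theorem iIndepFun.ae_injective [Countable ι] [IsFiniteMeasure P] {X : ι → Ω → ℝ}
    (hX : ∀ i, Measurable (X i)) (hind : iIndepFun X P)
    (hatom : ∀ i, NullSingletonClass (P.map (X i))) :
    ∀ᵐ ω ∂P, Function.Injective fun i => X i ω := by
  simp only [Function.Injective, ae_all_iff]
  intro i j
  by_cases hij : i = j
  · exact .of_forall fun _ _ => hij
  · have := hatom j
    exact measure_mono_null (fun _ hω => (Classical.not_imp.1 hω).1)
      ((hind.indepFun hij).measure_setOf_eq_eq_zero (hX i) (hX j))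

end ProbabilityTheory

namespace ChoquetPaper

variable {n : ℕ} {Ω : Type*}

theorem sortDesc_apply (y : Fin n → ℝ) (i : Fin n) : sortDesc y i = Tuple.sort y i.rev := rfl

theorem sortDesc_eq_iff {y : Fin n → ℝ} {ρ : Equiv.Perm (Fin n)} :
    sortDesc y = ρ ↔ Fin.revPerm.trans ρ = Tuple.sort y := by
  constructor
  · rintro rfl; ext i; simp [sortDesc_apply]
  · intro h; ext i; simp [sortDesc_apply, ← h]

theorem sortDesc_eq_of_strictAnti {y : Fin n → ℝ} {ρ : Equiv.Perm (Fin n)}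
    (h : StrictAnti (y ∘ ρ)) : sortDesc y = ρ := by
  rw [sortDesc_eq_iff, Tuple.eq_sort_iff]
  have hmono : StrictMono (y ∘ Fin.revPerm.trans ρ) := fun i j hij => h (Fin.rev_lt_rev.2 hij)
  exact ⟨hmono.monotone, fun _ _ hij heq => absurd heq (hmono hij).ne⟩

theorem strictAnti_comp_sortDesc {y : Fin n → ℝ} (hy : Function.Injective y) :
    StrictAnti (y ∘ sortDesc y) := fun _ _ hij =>
  ((Tuple.monotone_sort y) (Fin.rev_le_rev.2 hij.le)).lt_of_ne
    fun h => hij.ne' (Fin.rev_injective ((Tuple.sort y).injective (hy h)))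

theorem measurableSet_sortDesc_eq (ρ : Equiv.Perm (Fin n)) :
    MeasurableSet {y : Fin n → ℝ | sortDesc y = ρ} := by
  simp only [sortDesc_eq_iff, Tuple.eq_sort_iff, Monotone, Set.ofPred_and, Set.ofPred_forall]
  refine .inter (.iInter fun _ => .iInter fun _ => .iInter fun _ => ?_)
    (.iInter fun _ => .iInter fun _ => .iInter fun _ => ?_)
  · exact measurableSet_le (measurable_pi_apply _) (measurable_pi_apply _)
  · exact .imp (measurableSet_eq_fun (by fun_prop) (by fun_prop)) (.const _)

theorem measurable_choquet (ν : Finset (Fin n) → ℝ) : Measurable (choquet ν) :=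
  measurable_of_measurableSet_fiber (g := choquetPerm ν) measurableSet_sortDesc_eq
    fun ρ => by unfold choquetPerm; fun_prop

theorem choquet_comp_sortDesc_mul_inv (ν : Finset (Fin n) → ℝ) {y : Fin n → ℝ}
    (hy : Function.Injective y) (σ : Equiv.Perm (Fin n)) :
    choquet ν (y ∘ ⇑(sortDesc y * σ⁻¹))
      = ∑ i : Fin n, (nuSig ν σ ((i : ℕ) + 1) - nuSig ν σ (i : ℕ)) * y (sortDesc y i) := by
  have hσ : sortDesc (y ∘ ⇑(sortDesc y * σ⁻¹)) = σ := by
    refine sortDesc_eq_of_strictAnti ?_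
    convert strictAnti_comp_sortDesc hy using 1
    ext i; simp
  simp only [choquet, choquetPerm, hσ]
  simp

theorem orderStat_sub_eq (X : Fin n → Ω → ℝ) (ω : Ω) (i : Fin n) :
    orderStat X (n - i) ω = X (sortDesc (fun j => X j ω) i) ω := by
  rw [orderStat, dif_pos ⟨by omega, by omega⟩, sortDesc_apply]
  congr 3

theorem Ysig_eq_choquet (ν : Finset (Fin n) → ℝ) (σ : Equiv.Perm (Fin n))
    {X : Fin n → Ω → ℝ} {ω : Ω} (hω : Function.Injective fun i => X i ω) :
    Ysig ν σ X ω
      = choquet ν ((fun i => X i ω) ∘ ⇑(sortDesc (fun i => X i ω) * σ⁻¹)) := by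
  simp only [choquet_comp_sortDesc_mul_inv ν hω, Ysig, orderStat_sub_eq]

theorem statement0_general {Ω : Type*} [MeasurableSpace Ω] {n : ℕ}
    (P : Measure Ω) [IsProbabilityMeasure P]
    (ν : Finset (Fin n) → ℝ)
    (X : Fin n → Ω → ℝ) (hmeas : ∀ i, Measurable (X i))
    (hindep : iIndepFun X P)
    (μ : Measure ℝ) (hac : μ ≪ volume) (hdist : ∀ i, Measure.map (X i) P = μ)
    (h : ℝ → ℝ) (hh : Measurable h)
    (hint : Integrable (fun ω => h (choquet ν (fun i => X i ω))) P) :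
    ∫ ω, h (choquet ν (fun i => X i ω)) ∂P
      = (1 / (Nat.factorial n : ℝ)) *
          ∑ σ : Equiv.Perm (Fin n), ∫ ω, h (Ysig ν σ X ω) ∂P := by
  set x : Ω → Fin n → ℝ := fun ω i => X i ω
  have hx : Measurable x := measurable_pi_lambda _ hmeas
  have hF : Measurable (h ∘ choquet ν) := hh.comp (measurable_choquet ν)
  have hFπ : Integrable (h ∘ choquet ν) (P.map x) :=
    (integrable_map_measure hF.aestronglyMeasurable hx.aemeasurable).2 hint
  have hexch : ∀ τ : Equiv.Perm (Fin n), MeasurePreserving (· ∘ ⇑τ) (P.map x) (P.map x) :=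
    hindep.measurePreserving_comp_perm hmeas hdist
  have hinj : ∀ᵐ ω ∂P, Function.Injective (x ω) :=
    hindep.ae_injective hmeas fun i => hdist i ▸ ⟨fun a => hac (measure_singleton a)⟩
  have hYsig : ∀ σ, ∫ ω, h (Ysig ν σ X ω) ∂P
      = ∫ y, (h ∘ choquet ν) (y ∘ ⇑(sortDesc y * σ⁻¹)) ∂P.map x := fun σ => by
    rw [integral_map (f := fun y => (h ∘ choquet ν) (y ∘ ⇑(sortDesc y * σ⁻¹))) hx.aemeasurable
      (hF.comp (measurable_comp_mul_inv measurableSet_sortDesc_eq σ)).aestronglyMeasurable]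
    exact integral_congr_ae (hinj.mono fun ω hω => congrArg h (Ysig_eq_choquet ν σ hω))
  calc ∫ ω, h (choquet ν (x ω)) ∂P
      = ∫ y, (h ∘ choquet ν) y ∂P.map x :=
        (integral_map hx.aemeasurable hF.aestronglyMeasurable).symm
    _ = (1 / (n.factorial : ℝ)) *
          ∑ σ : Equiv.Perm (Fin n), ∫ y, (h ∘ choquet ν) (y ∘ ⇑(sortDesc y * σ⁻¹)) ∂P.map x := by
        rw [sum_integral_comp_mul_inv hexch measurableSet_sortDesc_eq hF.stronglyMeasurable hFπ,
          Fintype.card_fin, nsmul_eq_mul]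
        field_simp
    _ = _ := by simp only [hYsig]

/-- `E[h(Y_ν)] = (1/n!) · Σ_{σ ∈ 𝔖_n} E[h(Y_ν^σ)]`. -/
theorem statement0 {Ω : Type*} [MeasurableSpace Ω] {n : ℕ} (hn : 0 < n)
    (P : Measure Ω) [IsProbabilityMeasure P]
    (ν : Finset (Fin n) → ℝ) (hν0 : ν ∅ = 0) (hν01 : ∀ T, ν T ∈ Set.Icc (0:ℝ) 1)
    (X : Fin n → Ω → ℝ) (hmeas : ∀ i, Measurable (X i))
    (hindep : iIndepFun X P)
    (μ : Measure ℝ) (hac : μ ≪ volume) (hdist : ∀ i, Measure.map (X i) P = μ)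
    (h : ℝ → ℝ) (hh : Measurable h)
    (hint : Integrable (fun ω => h (choquet ν (fun i => X i ω))) P) :
    ∫ ω, h (choquet ν (fun i => X i ω)) ∂P
      = (1 / (Nat.factorial n : ℝ)) *
          ∑ σ : Equiv.Perm (Fin n), ∫ ω, h (Ysig ν σ X ω) ∂P :=
  statement0_general P ν X hmeas hindep μ hac hdist h hh hint

end ChoquetPaper
end
end

section
/- Let ν be a game on N, let r ≥ 1 be an integer, and let 0 ≤ i_1 ≤ i_2 ≤ ⋯ ≤ i_r ≤ n be integers. With the convention T_{r+1} := N, one has (1/n!) · Σ_{σ ∈ 𝔖_n} Π_{k=1}^r ν_{i_k}^σ = Σ_{T_1 ⊆ ⋯ ⊆ T_r ⊆ N with |T_k| = i_k for all k} Π_{i=1}^r ν(T_i)/C(|T_{i+1}|,|T_i|), where C(a,b) denotes the binomial coefficient. -/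
open MeasureTheory ProbabilityTheory Finset

noncomputable section

namespace ChoquetPaper

variable {n : ℕ} {Ω : Type*}

/-!
Send `σ` to the chain `k ↦ σ {0, …, i_k - 1}`. This maps the permutations onto the chains
`T₁ ⊆ ⋯ ⊆ T_r` with `|T_k| = i_k`, so the sum over `σ` regroups as a sum over chains,
weighted by the fibre sizes. Encode a chain `T` by its level function `x ↦ #{k | x ∉ T k}`.
A permutation maps the initial chain onto `T` exactly when it carries the level function of the
initial chain to that of `T`, so the fibre is a coset of the stabiliser of a level function. Its
size is therefore `∏ (i_{k+1} - i_k)!` (with `i_0 = 0`, `i_{r+1} = n`), which is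
`n! / ∏ C(i_{k+1}, i_k)`.
-/

open Equiv

lemma prod_factorial_sub_mul_choose {e : ℕ → ℕ} (he : Monotone e) (m : ℕ) :
    (∏ c ∈ range m, (e (c + 1) - e c).factorial * (e (c + 1)).choose (e c)) * (e 0).factorial
      = (e m).factorial := by
  induction m with
  | zero => simp
  | succ m ih =>
    rw [prod_range_succ, mul_right_comm, ih,
      ← Nat.choose_mul_factorial_mul_factorial (he m.le_succ)]
    ring

lemma card_perm_comp_eq {α κ : Type*} [Fintype α] [DecidableEq α] [DecidableEq κ]
    (β δ : α → κ) (h : ∀ c, Fintype.card {a // β a = c} = Fintype.card {a // δ a = c}) :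
    Fintype.card {σ : Perm α // δ ∘ σ = β}
      = ∏ c ∈ univ.image δ, (Fintype.card {a // δ a = c}).factorial := by
  let τ : Perm α := ofFiberEquiv fun c => Fintype.equivOfCardEq (h c)
  have hτ : δ ∘ τ = β := funext (ofFiberEquiv_map _)
  rw [← DomMulAct.stabilizer_card']
  refine Fintype.card_congr (subtypeEquiv (Equiv.mulRight τ⁻¹) fun σ => ?_)
  rw [Equiv.coe_mulRight, Perm.coe_mul, Perm.inv_def, ← Function.comp_assoc, comp_symm_eq, hτ]

section Chains

variable {α : Type*} [DecidableEq α] {r : ℕ}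

def level (A : Fin r → Finset α) (x : α) : ℕ := #{k | x ∉ A k}

lemma level_le (A : Fin r → Finset α) (x : α) : level A x ≤ r :=
  (card_filter_le _ _).trans (card_fin r).le

lemma mem_iff_level_le {A : Fin r → Finset α} (hA : Monotone A) (x : α) (k : Fin r) :
    x ∈ A k ↔ level A x ≤ k := by
  constructor
  · intro hx
    calc level A x ≤ #(Iio k) := card_le_card fun l hl => by
          simp only [mem_filter, mem_univ, true_and, mem_Iio] at hl ⊢
          by_contra! hkl
          exact hl (hA hkl hx)
      _ = k := Fin.card_Iio k
  · intro hle
    by_contra hx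
    have : #(Iic k) ≤ level A x := card_le_card fun l hl => by
      simp only [mem_filter, mem_univ, true_and, mem_Iic] at hl ⊢
      exact fun hxl => hx (hA hl hxl)
    rw [Fin.card_Iic] at this
    omega

lemma image_perm_eq_iff_level_comp {A B : Fin r → Finset α} (hA : Monotone A) (hB : Monotone B)
    (σ : Perm α) : (∀ k, (A k).image σ = B k) ↔ level B ∘ σ = level A := by
  constructor
  · intro hσ
    funext x
    simp only [Function.comp_apply, level, ← hσ, σ.injective.mem_finset_image]
  · intro hσ k
    ext y
    obtain ⟨x, rfl⟩ := σ.surjective y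
    rw [σ.injective.mem_finset_image, mem_iff_level_le hA, mem_iff_level_le hB, ← hσ,
      Function.comp_apply]

variable [Fintype α]

/-- For a monotone chain `A`, `cumCard A` lists the cardinalities of the extended chain
`∅ ⊆ A 0 ⊆ ⋯ ⊆ A (r - 1) ⊆ univ` (see `cumCard_succ`). -/
def cumCard (A : Fin r → Finset α) (c : ℕ) : ℕ := #{x | level A x < c}

lemma cumCard_zero (A : Fin r → Finset α) : cumCard A 0 = 0 := by
  simp [cumCard]

lemma cumCard_mono (A : Fin r → Finset α) : Monotone (cumCard A) := fun _ _ hcd =>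
  card_le_card fun x hx => by simp only [mem_filter, mem_univ, true_and] at hx ⊢; omega

lemma cumCard_succ {A : Fin r → Finset α} (hA : Monotone A) (k : ℕ) :
    cumCard A (k + 1) = if h : k < r then #(A ⟨k, h⟩) else Fintype.card α := by
  split_ifs with h
  · rw [cumCard]
    congr 1
    ext x
    simp [mem_iff_level_le hA x ⟨k, h⟩]
  · rw [cumCard, filter_true_of_mem fun x _ => by have := level_le A x; omega, card_univ]

lemma cumCard_eq_of_card_eq {A B : Fin r → Finset α} (hA : Monotone A) (hB : Monotone B)
    (hcard : ∀ k, #(A k) = #(B k)) : cumCard A = cumCard B := by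
  funext c
  cases c with
  | zero => rw [cumCard_zero, cumCard_zero]
  | succ k => simp only [cumCard_succ hA, cumCard_succ hB, hcard]

lemma card_level_eq (A : Fin r → Finset α) (c : ℕ) :
    Fintype.card {x // level A x = c} = cumCard A (c + 1) - cumCard A c := by
  have hsplit : univ.filter (fun x => level A x = c)
      = univ.filter (fun x => level A x < c + 1) \ univ.filter (fun x => level A x < c) := by
    ext x
    simp only [mem_filter, mem_sdiff, mem_univ, true_and]
    omega
  rw [Fintype.card_subtype, hsplit, card_sdiff_of_subset fun x hx => by
    simp only [mem_filter, mem_univ, true_and] at hx ⊢; omega]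
  rfl

lemma card_perm_image_eq {A B : Fin r → Finset α} (hA : Monotone A) (hB : Monotone B)
    (hcard : ∀ k, #(A k) = #(B k)) :
    #{σ : Perm α | ∀ k, (A k).image σ = B k}
      = ∏ c ∈ range (r + 1), (cumCard B (c + 1) - cumCard B c).factorial := by
  have hlevel (c : ℕ) :
      Fintype.card {x // level A x = c} = Fintype.card {x // level B x = c} := by
    rw [card_level_eq, card_level_eq, cumCard_eq_of_card_eq hA hB hcard]
  rw [filter_congr fun σ _ => image_perm_eq_iff_level_comp hA hB σ, ← Fintype.card_subtype,
    card_perm_comp_eq _ _ hlevel]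
  refine (prod_subset (fun c hc => ?_) fun c _ hc => ?_).trans
    (prod_congr rfl fun c _ => by rw [card_level_eq])
  · obtain ⟨x, -, rfl⟩ := mem_image.mp hc
    exact mem_range.mpr (Nat.lt_succ_of_le (level_le B x))
  · rw [Fintype.card_eq_zero_iff.mpr ⟨fun x => hc (mem_image.mpr ⟨x.1, mem_univ _, x.2⟩)⟩,
      Nat.factorial_zero]

lemma card_perm_image_eq_mul_prod_choose {A B : Fin r → Finset α} (hA : Monotone A)
    (hB : Monotone B) (hcard : ∀ k, #(A k) = #(B k)) :
    #{σ : Perm α | ∀ k, (A k).image σ = B k}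
        * ∏ c ∈ range (r + 1), (cumCard B (c + 1)).choose (cumCard B c)
      = (Fintype.card α).factorial := by
  have hlast : cumCard B (r + 1) = Fintype.card α := by simp [cumCard_succ hB]
  rw [card_perm_image_eq hA hB hcard, ← prod_mul_distrib, ← hlast,
    ← prod_factorial_sub_mul_choose (cumCard_mono B), cumCard_zero, Nat.factorial_zero, mul_one]

lemma prod_choose_cumCard {B : Fin r → Finset α} (hB : Monotone B) :
    ∏ c ∈ range (r + 1), (cumCard B (c + 1)).choose (cumCard B c)
      = ∏ k : Fin r,
          (if h : (k : ℕ) + 1 < r then #(B ⟨k + 1, h⟩) else Fintype.card α).choose #(B k) := by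
  rw [prod_range_succ', cumCard_zero, Nat.choose_zero_right, mul_one,
    ← Fin.prod_univ_eq_prod_range]
  refine prod_congr rfl fun k _ => ?_
  rw [cumCard_succ hB, cumCard_succ hB, dif_pos k.isLt]

end Chains

theorem statement4_general {n : ℕ}
    (ν : Finset (Fin n) → ℝ)
    (r : ℕ)
    (i : Fin r → ℕ) (hmono : Monotone i) (hle : ∀ k, i k ≤ n) :
    (1 / (Nat.factorial n : ℝ)) *
        ∑ σ : Equiv.Perm (Fin n), ∏ k : Fin r, nuSig ν σ (i k)
      = ∑ T ∈ Finset.univ.filter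
          (fun T : Fin r → Finset (Fin n) =>
            (∀ a b : Fin r, a ≤ b → T a ⊆ T b) ∧ ∀ k : Fin r, (T k).card = i k),
          ∏ k : Fin r,
            ν (T k) /
              (Nat.choose (if h : (k : ℕ) + 1 < r then (T ⟨(k : ℕ) + 1, h⟩).card else n)
                (T k).card : ℝ) := by
  set I : Fin r → Finset (Fin n) := fun k => univ.filter fun j : Fin n => (j : ℕ) < i k
  have hI : Monotone I := fun a b hab j hj => by
    simp only [I, mem_filter, mem_univ, true_and] at hj ⊢
    exact hj.trans_le (hmono hab)
  have hIcard (k : Fin r) : #(I k) = i k := by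
    rw [Fin.card_filter_val_lt, min_eq_right (hle k)]
  have hmaps (σ : Perm (Fin n)) : (fun k => (I k).image σ) ∈ univ.filter
      (fun T : Fin r → Finset (Fin n) =>
        (∀ a b : Fin r, a ≤ b → T a ⊆ T b) ∧ ∀ k : Fin r, (T k).card = i k) := by
    refine mem_filter.mpr ⟨mem_univ _, fun a b hab => image_subset_image (hI hab), fun k => ?_⟩
    rw [card_image_of_injective _ σ.injective, hIcard]
  rw [show ∑ σ : Perm (Fin n), ∏ k, nuSig ν σ (i k) = _ from
    (sum_fiberwise_of_maps_to' (fun σ _ => hmaps σ) fun T => ∏ k, ν (T k)).symm, mul_sum]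
  refine sum_congr rfl fun T hT => ?_
  obtain ⟨hT, hTcard⟩ := (mem_filter.mp hT).2
  have hfiber := card_perm_image_eq_mul_prod_choose hI hT fun k => by rw [hIcard, hTcard]
  rw [prod_choose_cumCard hT, Fintype.card_fin] at hfiber
  obtain ⟨hcard_ne, hchoose_ne⟩ := Nat.mul_ne_zero_iff.mp (hfiber ▸ n.factorial_ne_zero)
  rw [sum_const, filter_congr fun σ _ => funext_iff, nsmul_eq_mul, prod_div_distrib,
    ← Nat.cast_prod, ← hfiber, Nat.cast_mul]
  field_simp

/-- the combinatorial identity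
`(1/n!) Σ_σ Π_k ν_{i_k}^σ = Σ_{T_1 ⊆ ⋯ ⊆ T_r, |T_k| = i_k} Π_i ν(T_i)/C(|T_{i+1}|,|T_i|)`. -/
theorem statement4 {n : ℕ} (hn : 0 < n)
    (ν : Finset (Fin n) → ℝ) (hν0 : ν ∅ = 0) (hν01 : ∀ T, ν T ∈ Set.Icc (0:ℝ) 1)
    (r : ℕ) (hr : 1 ≤ r)
    (i : Fin r → ℕ) (hmono : Monotone i) (hle : ∀ k, i k ≤ n) :
    (1 / (Nat.factorial n : ℝ)) *
        ∑ σ : Equiv.Perm (Fin n), ∏ k : Fin r, nuSig ν σ (i k)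
      = ∑ T ∈ Finset.univ.filter
          (fun T : Fin r → Finset (Fin n) =>
            (∀ a b : Fin r, a ≤ b → T a ⊆ T b) ∧ ∀ k : Fin r, (T k).card = i k),
          ∏ k : Fin r,
            ν (T k) /
              (Nat.choose (if h : (k : ℕ) + 1 < r then (T ⟨(k : ℕ) + 1, h⟩).card else n)
                (T k).card : ℝ) :=
  statement4_general ν r i hmono hle

end ChoquetPaper
end
end

section
/- For any game ν on N, E[Y_ν] = (1/(n+1)) · Σ_{T ⊆ N} ν(T)/C(n,|T|), where C(a,b) denotes the binomial coefficient. -/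
/-!
For `x ∈ [0,1]ⁿ` the Choquet integral has the layer-cake form `C_ν(x) = ∫₀¹ ν{i | t < xᵢ} dt`.
For fixed `t`, independence gives `P({i | t < Uᵢ} = T) = (1 - t)^|T| t^(n - |T|)`, so after
Fubini `E[Y_ν] = Σ_T ν(T) ∫₀¹ (1 - t)^|T| t^(n - |T|) dt`, and this Beta integral equals
`1 / ((n + 1) C(n, |T|))`.
-/

open MeasureTheory ProbabilityTheory Finset

noncomputable section

namespace ChoquetPaper

variable {n : ℕ} {Ω : Type*}

open scoped Nat

lemma nuSig_zero {ν : Finset (Fin n) → ℝ} (hν0 : ν ∅ = 0) (σ : Equiv.Perm (Fin n)) :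
    nuSig ν σ 0 = 0 := by
  simp [nuSig, hν0]

lemma antitone_comp_sortDesc (x : Fin n → ℝ) : Antitone (x ∘ sortDesc x) :=
  fun _ _ hij => Tuple.monotone_sort x (Fin.rev_le_rev.mpr hij)

lemma IsLowerSet.eq_filter_val_lt_card {s : Finset (Fin n)} (hs : IsLowerSet (s : Set (Fin n))) :
    s = univ.filter fun j : Fin n => (j : ℕ) < #s := by
  ext i
  simp only [mem_filter, mem_univ, true_and]
  constructor
  · intro hi
    have := card_le_card fun j hj => hs (mem_Iic.mp hj) hi
    rw [Fin.card_Iic] at this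
    omega
  · intro hi
    by_contra hi'
    have := card_le_card fun j (hj : j ∈ s) =>
      mem_Iio.mpr (lt_of_not_ge fun hij => hi' (hs hij hj))
    rw [Fin.card_Iio] at this
    omega

lemma sum_ite_val_lt_sub (F : ℕ → ℝ) {c : ℕ} (hc : c ≤ n) :
    ∑ i : Fin n, (if (i : ℕ) < c then F (i + 1) - F i else 0) = F c - F 0 := by
  rw [Fin.sum_univ_eq_sum_range (fun j => if j < c then F (j + 1) - F j else 0), ← sum_filter,
    show (range n).filter (· < c) = range c by ext; simp; omega, sum_range_sub]

/-- As `x ∘ sortDesc x` is antitone, `{j | t < x (σ j)}` is an initial segment of `Fin n`, so the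
sum telescopes to `ν_c^σ - ν_0^σ` with `c` the size of that segment. -/
lemma apply_filter_lt_eq_sum {ν : Finset (Fin n) → ℝ} (hν0 : ν ∅ = 0) (x : Fin n → ℝ) (t : ℝ) :
    ν (univ.filter fun i => t < x i) =
      ∑ i : Fin n, (nuSig ν (sortDesc x) (i + 1) - nuSig ν (sortDesc x) i) *
        (Set.Iio (x (sortDesc x i))).indicator 1 t := by
  set σ := sortDesc x
  set s := univ.filter fun j => t < x (σ j)
  have hs : s = univ.filter fun j : Fin n => (j : ℕ) < #s :=
    IsLowerSet.eq_filter_val_lt_card fun i j hji hi => by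
      simp only [s, coe_filter, mem_univ, true_and, Set.mem_ofPred_eq] at hi ⊢
      exact hi.trans_le (antitone_comp_sortDesc x hji)
  have hmem : ∀ j : Fin n, t < x (σ j) ↔ (j : ℕ) < #s := fun j => by
    simpa [s] using Finset.ext_iff.mp hs j
  simp_rw [Set.indicator_apply, Set.mem_Iio, Pi.one_apply, mul_ite, mul_one, mul_zero, hmem]
  rw [sum_ite_val_lt_sub _ ((card_le_univ s).trans_eq (Fintype.card_fin n)), nuSig_zero hν0,
    sub_zero, nuSig, ← hs, ← filter_image (p := fun i => t < x i), image_univ_equiv]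

lemma setIntegral_Icc_indicator_Iio {c : ℝ} (hc : c ∈ Set.Icc (0 : ℝ) 1) :
    ∫ t in Set.Icc (0 : ℝ) 1, (Set.Iio c).indicator 1 t = c := by
  rw [integral_indicator_one measurableSet_Iio, measureReal_restrict_apply measurableSet_Iio,
    show Set.Iio c ∩ Set.Icc 0 1 = Set.Ico 0 c from Set.ext fun t =>
      ⟨fun ⟨h, h0, _⟩ => ⟨h0, h⟩, fun ⟨h0, h⟩ => ⟨h, h0, h.le.trans hc.2⟩⟩,
    Real.volume_real_Ico_of_le hc.1, sub_zero]

theorem choquet_eq_setIntegral {ν : Finset (Fin n) → ℝ} (hν0 : ν ∅ = 0) {x : Fin n → ℝ}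
    (hx : ∀ i, x i ∈ Set.Icc (0 : ℝ) 1) :
    choquet ν x = ∫ t in Set.Icc (0 : ℝ) 1, ν (univ.filter fun i => t < x i) := by
  simp_rw [apply_filter_lt_eq_sum hν0 x]
  rw [integral_finsetSum _ fun i _ =>
    ((integrable_const 1).indicator measurableSet_Iio).const_mul _]
  simp_rw [integral_const_mul, setIntegral_Icc_indicator_Iio (hx _)]
  rfl

lemma integral_pow_mul_one_sub_pow (a b : ℕ) :
    ∫ t in (0 : ℝ)..1, t ^ a * (1 - t) ^ b = a ! * b ! / (a + b + 1)! := by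
  have h := Complex.betaIntegral_eq_Gamma_mul_div (a + 1) (b + 1) (by simp; positivity)
    (by simp; positivity)
  rw [Complex.betaIntegral, show (a + 1 + (b + 1) : ℂ) = (a + b + 1 : ℕ) + 1 by push_cast; ring,
    Complex.Gamma_nat_eq_factorial, Complex.Gamma_nat_eq_factorial,
    Complex.Gamma_nat_eq_factorial] at h
  simp_rw [add_sub_cancel_right, Complex.cpow_natCast] at h
  norm_cast at h
  rw [intervalIntegral.integral_ofReal] at h
  exact Complex.ofReal_injective (by push_cast at h ⊢; exact h)

lemma integral_one_sub_pow_mul_pow {k m : ℕ} (hk : k ≤ m) :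
    ∫ t in (0 : ℝ)..1, (1 - t) ^ k * t ^ (m - k) = 1 / (m + 1) / m.choose k := by
  simp_rw [mul_comm ((1 - _ : ℝ) ^ k)]
  rw [integral_pow_mul_one_sub_pow, Nat.sub_add_cancel hk, Nat.cast_choose ℝ hk,
    Nat.factorial_succ]
  field_simp
  push_cast
  ring

section Probability

variable [MeasurableSpace Ω] {ι : Type*} [Fintype ι]

lemma measurable_filter_lt {Y : ι → Ω → ℝ} {s : Ω → ℝ} (hY : ∀ i, Measurable (Y i))
    (hs : Measurable s) : Measurable fun ω => univ.filter fun i => s ω < Y i ω :=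
  measurable_finset_iff.mpr fun i => by
    simpa using measurableSet_setOfPred.mp (measurableSet_lt hs (hY i))

lemma measureReal_filter_lt_eq [DecidableEq ι] {P : Measure Ω} [IsProbabilityMeasure P]
    {X : ι → Ω → ℝ} (hmeas : ∀ i, Measurable (X i)) (hindep : iIndepFun X P) {t p : ℝ}
    (hp : ∀ i, P.real {ω | X i ω ≤ t} = p) (T : Finset ι) :
    P.real {ω | univ.filter (fun i => t < X i ω) = T} = (1 - p) ^ #T * p ^ #Tᶜ := by
  set S : ι → Set ℝ := fun i => if i ∈ T then Set.Ioi t else Set.Iic t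
  have hS : ∀ i, MeasurableSet (S i) := fun i => by
    by_cases hi : i ∈ T <;> simp [S, hi, measurableSet_Ioi, measurableSet_Iic]
  have hset :
      {ω | univ.filter (fun i => t < X i ω) = T} = ⋂ i ∈ (univ : Finset ι), X i ⁻¹' S i := by
    ext ω
    simp only [Set.mem_ofPred_eq, Finset.ext_iff, mem_filter, mem_univ, true_and, Set.mem_iInter,
      Set.mem_preimage, forall_const]
    refine forall_congr' fun i => ?_
    by_cases hi : i ∈ T <;> simp [S, hi]
  have hprob : ∀ i, P.real (X i ⁻¹' S i) = if i ∈ T then 1 - p else p := fun i => by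
    by_cases hi : i ∈ T
    · simp only [S, hi, if_true]
      rw [← hp i, ← Set.compl_Iic, Set.preimage_compl,
        probReal_compl_eq_one_sub (hmeas i measurableSet_Iic)]
      rfl
    · simp only [S, hi, if_false]
      exact hp i
  rw [hset, measureReal_def, hindep.measure_inter_preimage_eq_mul univ fun i _ => hS i,
    ENNReal.toReal_prod]
  simp_rw [← measureReal_def, hprob]
  rw [prod_ite, prod_const, prod_const, filter_univ_mem, ← sdiff_eq_filter,
    ← compl_eq_univ_sdiff]

lemma integral_comp_filter_lt [DecidableEq ι] {P : Measure Ω} [IsProbabilityMeasure P]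
    {X : ι → Ω → ℝ} (hmeas : ∀ i, Measurable (X i)) (hindep : iIndepFun X P) {t p : ℝ}
    (hp : ∀ i, P.real {ω | X i ω ≤ t} = p) (g : Finset ι → ℝ) :
    ∫ ω, g (univ.filter fun i => t < X i ω) ∂P = ∑ T, g T * ((1 - p) ^ #T * p ^ #Tᶜ) := by
  have hF := measurable_filter_lt hmeas (measurable_const (a := t))
  rw [← integral_map hF.aemeasurable Measurable.of_discrete.aestronglyMeasurable,
    integral_fintype Integrable.of_finite]
  refine sum_congr rfl fun T _ => ?_
  rw [map_measureReal_apply hF (measurableSet_singleton T), smul_eq_mul, mul_comm]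
  exact congrArg _ (measureReal_filter_lt_eq hmeas hindep hp T)

end Probability

section Uniform

variable [MeasurableSpace Ω] {P : Measure Ω} {U : Ω → ℝ}

lemma measureReal_le_of_map_eq_uniform (hU : Measurable U)
    (hdist : P.map U = volume.restrict (Set.Icc (0 : ℝ) 1)) {t : ℝ} (ht : t ∈ Set.Icc (0 : ℝ) 1) :
    P.real {ω | U ω ≤ t} = t := by
  rw [show {ω | U ω ≤ t} = U ⁻¹' Set.Iic t from rfl, ← map_measureReal_apply hU measurableSet_Iic,
    hdist, measureReal_restrict_apply measurableSet_Iic,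
    show Set.Iic t ∩ Set.Icc 0 1 = Set.Icc 0 t from Set.ext fun s =>
      ⟨fun ⟨h, h0, _⟩ => ⟨h0, h⟩, fun ⟨h0, h⟩ => ⟨h, h0, h.trans ht.2⟩⟩,
    Real.volume_real_Icc_of_le ht.1, sub_zero]

lemma ae_mem_Icc_of_map_eq_uniform (hU : Measurable U)
    (hdist : P.map U = volume.restrict (Set.Icc (0 : ℝ) 1)) : ∀ᵐ ω ∂P, U ω ∈ Set.Icc (0 : ℝ) 1 :=
  ae_of_ae_map hU.aemeasurable (hdist ▸ ae_restrict_mem measurableSet_Icc)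

end Uniform

theorem statement8_general {Ω : Type*} [MeasurableSpace Ω] {n : ℕ}
    (P : Measure Ω) [IsProbabilityMeasure P]
    (ν : Finset (Fin n) → ℝ) (hν0 : ν ∅ = 0)
    (X : Fin n → Ω → ℝ) (hmeas : ∀ i, Measurable (X i))
    (hindep : iIndepFun X P)
    (hdist : ∀ i, Measure.map (X i) P = volume.restrict (Set.Icc (0:ℝ) 1)) :
    ∫ ω, choquet ν (fun i => X i ω) ∂P
      = (1 / ((n : ℝ) + 1)) * ∑ T : Finset (Fin n), ν T / (Nat.choose n T.card : ℝ) := by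
  have hint : Integrable (Function.uncurry fun ω t => ν (univ.filter fun i => t < X i ω))
      (P.prod (volume.restrict (Set.Icc (0 : ℝ) 1))) :=
    Integrable.of_finite.comp_measurable
      (measurable_filter_lt (fun i => (hmeas i).comp measurable_fst) measurable_snd)
  calc ∫ ω, choquet ν (fun i => X i ω) ∂P
      = ∫ ω, (∫ t in Set.Icc (0 : ℝ) 1, ν (univ.filter fun i => t < X i ω)) ∂P :=
        integral_congr_ae <| (ae_all_iff.mpr fun i => ae_mem_Icc_of_map_eq_uniform (hmeas i)
          (hdist i)).mono fun ω hω => choquet_eq_setIntegral hν0 hω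
    _ = ∫ t in Set.Icc (0 : ℝ) 1, ∫ ω, ν (univ.filter fun i => t < X i ω) ∂P :=
        integral_integral_swap hint
    _ = ∫ t in Set.Icc (0 : ℝ) 1, ∑ T, ν T * ((1 - t) ^ #T * t ^ (n - #T)) :=
        setIntegral_congr_fun measurableSet_Icc fun t ht => by
          simp_rw [integral_comp_filter_lt hmeas hindep
            (fun i => measureReal_le_of_map_eq_uniform (hmeas i) (hdist i) ht), card_compl,
            Fintype.card_fin]
    _ = ∑ T : Finset (Fin n), ν T * (1 / (n + 1) / n.choose #T) := by
        rw [integral_finsetSum _ fun T _ => (by fun_prop : Continuous _).integrableOn_Icc]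
        refine sum_congr rfl fun T _ => ?_
        rw [integral_const_mul, integral_Icc_eq_integral_Ioc,
          ← intervalIntegral.integral_of_le zero_le_one,
          integral_one_sub_pow_mul_pow ((card_le_univ T).trans_eq (Fintype.card_fin n))]
    _ = _ := by
        rw [mul_sum]
        exact sum_congr rfl fun T _ => by ring

/-- in the standard uniform case, `E[Y_ν] = (1/(n+1)) Σ_{T ⊆ N} ν(T)/C(n,|T|)`. -/
theorem statement8 {Ω : Type*} [MeasurableSpace Ω] {n : ℕ} (hn : 0 < n)
    (P : Measure Ω) [IsProbabilityMeasure P]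
    (ν : Finset (Fin n) → ℝ) (hν0 : ν ∅ = 0) (hν01 : ∀ T, ν T ∈ Set.Icc (0:ℝ) 1)
    (X : Fin n → Ω → ℝ) (hmeas : ∀ i, Measurable (X i))
    (hindep : iIndepFun X P)
    (hdist : ∀ i, Measure.map (X i) P = volume.restrict (Set.Icc (0:ℝ) 1)) :
    ∫ ω, choquet ν (fun i => X i ω) ∂P
      = (1 / ((n : ℝ) + 1)) * ∑ T : Finset (Fin n), ν T / (Nat.choose n T.card : ℝ) :=
  statement8_general P ν hν0 X hmeas hindep hdist

end ChoquetPaper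
end
end

section
/- Let a_0, a_1, …, a_n be pairwise distinct real numbers and let g : ℝ → ℝ be n times continuously differentiable. Then ∫_{{x ∈ [0,1]^n : x_1 ≥ x_2 ≥ ⋯ ≥ x_n}} g^{(n)}( a_0 + Σ_{i=1}^n (a_i − a_{i−1}) x_i ) dx = Σ_{i=0}^n g(a_i) / Π_{j ≠ i} (a_i − a_j). -/
/-!
Induction on `n`. The first coordinate `x₁` of a point of the ordered cube ranges over `[x₂, 1]`,
and the argument of `g⁽ⁿ⁾` is affine in `x₁` with slope `a₁ - a₀`. Integrating `x₁` out by the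
fundamental theorem of calculus leaves `(g⁽ⁿ⁻¹⁾(P) - g⁽ⁿ⁻¹⁾(Q)) / (a₁ - a₀)` integrated over the
ordered cube of dimension `n - 1`, where `P` and `Q` are the corresponding points for the nodes
`a₁, …, aₙ` and `a₀, a₂, …, aₙ`. The induction hypothesis and the recurrence
`[a₀, …, aₙ] = ([a₁, …, aₙ] - [a₀, a₂, …, aₙ]) / (a₁ - a₀)` of divided differences conclude.
-/

open MeasureTheory ProbabilityTheory Finset

noncomputable section

namespace ChoquetPaper

variable {n : ℕ} {Ω : Type*}

section DividedDifference

variable {ι : Type*} [DecidableEq ι]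

lemma ddiff_erase (g : ℝ → ℝ) {s : Finset ι} {a : ι → ℝ} (ha : Set.InjOn a s) {p : ι}
    (hp : p ∈ s) :
    ddiff g (s.erase p) a = ∑ i ∈ s, (a i - a p) * (g (a i) / ∏ j ∈ s.erase i, (a i - a j)) := by
  rw [← Finset.sum_erase s (a := p) (by simp), ddiff]
  refine Finset.sum_congr rfl fun i hi => ?_
  obtain ⟨hip, his⟩ := Finset.mem_erase.mp hi
  have hsub : a i - a p ≠ 0 := sub_ne_zero.mpr fun h => hip (ha his hp h)
  rw [← Finset.mul_prod_erase (s.erase i) _ (Finset.mem_erase.mpr ⟨Ne.symm hip, hp⟩),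
    Finset.erase_right_comm, mul_div_assoc', mul_div_mul_left _ _ hsub]

lemma sub_mul_ddiff (g : ℝ → ℝ) {s : Finset ι} {a : ι → ℝ} (ha : Set.InjOn a s) {p q : ι}
    (hp : p ∈ s) (hq : q ∈ s) :
    (a q - a p) * ddiff g s a = ddiff g (s.erase p) a - ddiff g (s.erase q) a := by
  rw [ddiff_erase g ha hp, ddiff_erase g ha hq, ← Finset.sum_sub_distrib, ddiff, Finset.mul_sum]
  exact Finset.sum_congr rfl fun i _ => by ring

lemma ddiff_image {κ : Type*} [DecidableEq κ] (g : ℝ → ℝ) (s : Finset κ) (a : ι → ℝ)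
    {e : κ → ι} (he : Function.Injective e) :
    ddiff g (s.image e) a = ddiff g s (a ∘ e) := by
  simp only [ddiff, Finset.sum_image he.injOn, ← Finset.image_erase he,
    Finset.prod_image he.injOn, Function.comp_apply]

end DividedDifference

lemma ddiff_univ_erase {n : ℕ} (g : ℝ → ℝ) (a : Fin (n + 1) → ℝ) (i : Fin (n + 1)) :
    ddiff g (Finset.univ.erase i) a = ddiff g Finset.univ (a ∘ i.succAbove) := by
  rw [← ddiff_image g _ a (Fin.succAbove_right_injective), Fin.image_succAbove_univ,
    Finset.compl_singleton]

lemma ddiff_univ_succ {n : ℕ} (g : ℝ → ℝ) {a : Fin (n + 2) → ℝ} (ha : Function.Injective a) :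
    ddiff g Finset.univ a
      = (ddiff g Finset.univ (a ∘ Fin.succ) - ddiff g Finset.univ (a ∘ (1 : Fin (n + 2)).succAbove))
        / (a 1 - a 0) := by
  rw [eq_div_iff (sub_ne_zero.mpr (ha.ne Fin.zero_ne_one.symm)), mul_comm,
    sub_mul_ddiff g ha.injOn (Finset.mem_univ 0) (Finset.mem_univ 1), ddiff_univ_erase,
    ddiff_univ_erase, Fin.succAbove_zero]

lemma _root_.Fin.antitone_cons {α : Type*} [Preorder α] {n : ℕ} {f : Fin n → α} {a : α} :
    Antitone (Fin.cons a f : Fin (n + 1) → α) ↔ (∀ i, f i ≤ a) ∧ Antitone f := by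
  simp only [antitone_iff_forall_lt]
  exact Fin.liftFun_cons (· ≥ ·)

def orderedCube (n : ℕ) : Set (Fin n → ℝ) :=
  {x | (∀ i, x i ∈ Set.Icc (0 : ℝ) 1) ∧ ∀ i j : Fin n, i ≤ j → x j ≤ x i}

/-- The lower bound of the first coordinate of a point of `orderedCube (n + 1)` whose other
coordinates are `y`. -/
def cubeFloor : {n : ℕ} → (Fin n → ℝ) → ℝ
  | 0, _ => 0
  | _ + 1, y => y 0

lemma isCompact_orderedCube (n : ℕ) : IsCompact (orderedCube n) := by
  have hclosed : IsClosed (orderedCube n) := by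
    simp only [orderedCube, Set.ofPred_and, Set.ofPred_forall]
    exact (isClosed_iInter fun i => isClosed_Icc.preimage (continuous_apply i)).inter
      (isClosed_iInter fun i => isClosed_iInter fun j => isClosed_iInter fun _ =>
        isClosed_le (continuous_apply j) (continuous_apply i))
  exact (isCompact_univ_pi fun _ => isCompact_Icc).of_isClosed_subset hclosed
    fun x hx => Set.mem_univ_pi.mpr hx.1

lemma cubeFloor_mem_Icc {n : ℕ} {y : Fin n → ℝ} (hy : y ∈ orderedCube n) :
    cubeFloor y ∈ Set.Icc (0 : ℝ) 1 := by
  cases n with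
  | zero => simp [cubeFloor]
  | succ n => exact hy.1 0

lemma cons_mem_orderedCube_iff {n : ℕ} {t : ℝ} {y : Fin n → ℝ} :
    Fin.cons t y ∈ orderedCube (n + 1) ↔ y ∈ orderedCube n ∧ t ∈ Set.Icc (cubeFloor y) 1 := by
  have hanti : ∀ {m} (x : Fin m → ℝ), (∀ i j : Fin m, i ≤ j → x j ≤ x i) ↔ Antitone x :=
    fun _ => Iff.rfl
  simp only [orderedCube, Set.mem_ofPred_eq]
  rw [hanti, hanti, Fin.antitone_cons, Fin.forall_fin_succ]
  simp only [Fin.cons_zero, Fin.cons_succ]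
  cases n with
  | zero => simp [cubeFloor, and_comm]
  | succ n =>
    simp only [cubeFloor, Set.mem_Icc]
    constructor
    · rintro ⟨⟨⟨-, ht1⟩, hy⟩, hyt, hy_anti⟩
      exact ⟨⟨hy, hy_anti⟩, hyt 0, ht1⟩
    · rintro ⟨⟨hy, hy_anti⟩, hy0t, ht1⟩
      exact ⟨⟨⟨(hy 0).1.trans hy0t, ht1⟩, hy⟩, fun i => (hy_anti (Fin.zero_le i)).trans hy0t,
        hy_anti⟩

/-- The point `∑ i, (x (i - 1) - x i) * a i` of the convex hull of the nodes `a`, where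
`x (-1) = 1` and `x n = 0`. -/
def simplexPoint {n : ℕ} (a : Fin (n + 1) → ℝ) (x : Fin n → ℝ) : ℝ :=
  a 0 + ∑ i : Fin n, (a i.succ - a i.castSucc) * x i

lemma continuous_simplexPoint {n : ℕ} (a : Fin (n + 1) → ℝ) : Continuous (simplexPoint a) := by
  unfold simplexPoint
  fun_prop

lemma simplexPoint_cons_one {n : ℕ} (a : Fin (n + 2) → ℝ) (y : Fin n → ℝ) :
    simplexPoint a (Fin.cons 1 y) = simplexPoint (a ∘ Fin.succ) y := by
  simp only [simplexPoint, Fin.sum_univ_succ, Fin.cons_zero, Fin.cons_succ, Function.comp_apply,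
    Fin.succ_castSucc, Fin.succ_zero_eq_one, Fin.castSucc_zero, mul_one]
  ring

lemma simplexPoint_cons {n : ℕ} (a : Fin (n + 2) → ℝ) (t : ℝ) (y : Fin n → ℝ) :
    simplexPoint a (Fin.cons t y)
      = simplexPoint (a ∘ (1 : Fin (n + 2)).succAbove) y - (a 1 - a 0) * cubeFloor y
        + (a 1 - a 0) * t := by
  cases n with
  | zero => simp [simplexPoint, cubeFloor]
  | succ n =>
    simp only [simplexPoint, Fin.sum_univ_succ, Fin.succ_zero_eq_one, Fin.castSucc_zero,
      Fin.cons_zero, Fin.castSucc_succ, Fin.cons_succ, Fin.succ_one_eq_two, Function.comp_apply,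
      Fin.one_succAbove_zero, Fin.one_succAbove_succ, cubeFloor]
    ring

lemma integral_fin_cons {α E : Type*} [MeasureSpace α] [SigmaFinite (volume : Measure α)]
    [NormedAddCommGroup E] [NormedSpace ℝ E] {n : ℕ} {f : (Fin (n + 1) → α) → E}
    (hf : Integrable f) :
    ∫ x, f x = ∫ y : Fin n → α, ∫ t : α, f (Fin.cons t y) := by
  have hcons := (volume_preserving_piFinSuccAbove (fun _ : Fin (n + 1) => α) 0).symm
  have hsymm : ∀ p : α × (Fin n → α),
      (MeasurableEquiv.piFinSuccAbove (fun _ => α) 0).symm p = Fin.cons p.1 p.2 := fun p => by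
    simp [MeasurableEquiv.piFinSuccAbove_symm_apply, Fin.insertNthEquiv]
  rw [← hcons.integral_comp', Measure.volume_eq_prod, integral_prod_symm]
  · simp only [hsymm]
  · exact (hcons.integrable_comp_emb (MeasurableEquiv.measurableEmbedding _)).mpr hf

lemma setIntegral_orderedCube_succ {E : Type*} [NormedAddCommGroup E] [NormedSpace ℝ E] {n : ℕ}
    {f : (Fin (n + 1) → ℝ) → E} (hf : IntegrableOn f (orderedCube (n + 1))) :
    ∫ x in orderedCube (n + 1), f x
      = ∫ y in orderedCube n, ∫ t in Set.Icc (cubeFloor y) 1, f (Fin.cons t y) := by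
  have hmeas : ∀ m, MeasurableSet (orderedCube m) :=
    fun m => (isCompact_orderedCube m).isClosed.measurableSet
  rw [← integral_indicator (hmeas _), integral_fin_cons (hf.integrable_indicator (hmeas _)),
    ← integral_indicator (hmeas _)]
  congr 1
  funext y
  by_cases hy : y ∈ orderedCube n
  · rw [Set.indicator_of_mem hy, ← integral_indicator measurableSet_Icc]
    simp only [Set.indicator, cons_mem_orderedCube_iff, hy, true_and]
  · simp [Set.indicator, cons_mem_orderedCube_iff, hy]

lemma integral_iteratedDeriv_succ_comp_add_mul {g : ℝ → ℝ} {n : ℕ} (hg : ContDiff ℝ (n + 1) g)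
    (c : ℝ) {d : ℝ} (hd : d ≠ 0) (l u : ℝ) :
    ∫ t in l..u, iteratedDeriv (n + 1) g (c + d * t)
      = (iteratedDeriv n g (c + d * u) - iteratedDeriv n g (c + d * l)) / d := by
  have hcont : Continuous (deriv (iteratedDeriv n g)) := by
    rw [← iteratedDeriv_succ]
    exact hg.continuous_iteratedDeriv' (n + 1)
  rw [intervalIntegral.integral_comp_add_mul _ hd, iteratedDeriv_succ,
    intervalIntegral.integral_deriv_eq_sub
      (fun x _ => (hg.differentiable_iteratedDeriv' n).differentiableAt)
      (hcont.intervalIntegrable _ _),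
    smul_eq_mul, inv_mul_eq_div]

lemma _root_.Continuous.integrableOn_orderedCube {n : ℕ} {f : (Fin n → ℝ) → ℝ} (hf : Continuous f) :
    IntegrableOn f (orderedCube n) :=
  hf.continuousOn.integrableOn_compact (isCompact_orderedCube n)

theorem setIntegral_orderedCube_iteratedDeriv_simplexPoint {n : ℕ} {a : Fin (n + 1) → ℝ}
    (ha : Function.Injective a) {g : ℝ → ℝ} (hg : ContDiff ℝ n g) :
    ∫ x in orderedCube n, iteratedDeriv n g (simplexPoint a x) = ddiff g Finset.univ a := by
  induction n with
  | zero =>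
    simp [orderedCube, simplexPoint, ddiff, measureReal_def, volume_pi, Measure.pi_empty_univ]
  | succ n ih =>
    have hd : a 1 - a 0 ≠ 0 := sub_ne_zero.mpr (ha.ne Fin.zero_ne_one.symm)
    have hgn : ContDiff ℝ n g := hg.of_le (by norm_cast; omega)
    have hint : ∀ b : Fin (n + 1) → ℝ,
        IntegrableOn (fun y => iteratedDeriv n g (simplexPoint b y)) (orderedCube n) := fun b =>
      ((hgn.continuous_iteratedDeriv' n).comp (continuous_simplexPoint b)).integrableOn_orderedCube
    have inner : ∀ y ∈ orderedCube n,
        ∫ t in Set.Icc (cubeFloor y) 1, iteratedDeriv (n + 1) g (simplexPoint a (Fin.cons t y))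
          = (iteratedDeriv n g (simplexPoint (a ∘ Fin.succ) y)
              - iteratedDeriv n g (simplexPoint (a ∘ (1 : Fin (n + 2)).succAbove) y))
            / (a 1 - a 0) := by
      intro y hy
      rw [integral_Icc_eq_integral_Ioc, ← intervalIntegral.integral_of_le (cubeFloor_mem_Icc hy).2]
      simp_rw [simplexPoint_cons]
      rw [integral_iteratedDeriv_succ_comp_add_mul hg _ hd, ← simplexPoint_cons,
        simplexPoint_cons_one, sub_add_cancel]
    calc ∫ x in orderedCube (n + 1), iteratedDeriv (n + 1) g (simplexPoint a x)
        = ∫ y in orderedCube n, ∫ t in Set.Icc (cubeFloor y) 1,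
            iteratedDeriv (n + 1) g (simplexPoint a (Fin.cons t y)) :=
          setIntegral_orderedCube_succ <| Continuous.integrableOn_orderedCube <|
            (hg.continuous_iteratedDeriv' _).comp (continuous_simplexPoint a)
      _ = ∫ y in orderedCube n, (iteratedDeriv n g (simplexPoint (a ∘ Fin.succ) y)
              - iteratedDeriv n g (simplexPoint (a ∘ (1 : Fin (n + 2)).succAbove) y))
            / (a 1 - a 0) :=
          setIntegral_congr_fun (isCompact_orderedCube n).isClosed.measurableSet inner
      _ = (ddiff g Finset.univ (a ∘ Fin.succ)
            - ddiff g Finset.univ (a ∘ (1 : Fin (n + 2)).succAbove)) / (a 1 - a 0) := by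
          rw [integral_div, integral_sub (hint _) (hint _),
            ih (ha.comp (Fin.succ_injective _)) hgn, ih (ha.comp Fin.succAbove_right_injective) hgn]
      _ = ddiff g Finset.univ a := (ddiff_univ_succ g ha).symm

theorem statement13_general {n : ℕ}
    (a : Fin (n + 1) → ℝ) (ha : Function.Injective a)
    (g : ℝ → ℝ) (hg : ContDiff ℝ n g) :
    ∫ x in {x : Fin n → ℝ | (∀ i, x i ∈ Set.Icc (0:ℝ) 1) ∧ ∀ i j : Fin n, i ≤ j → x j ≤ x i},
        iteratedDeriv n g (a 0 + ∑ i : Fin n, (a i.succ - a i.castSucc) * x i)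
      = ∑ i : Fin (n + 1), g (a i) / ∏ j ∈ Finset.univ.erase i, (a i - a j) :=
  setIntegral_orderedCube_iteratedDeriv_simplexPoint ha hg

/-- the Hermite–Genocchi formula combined with the explicit expression of divided
differences at pairwise distinct arguments. -/
theorem statement13 {n : ℕ} (hn : 0 < n)
    (a : Fin (n + 1) → ℝ) (ha : Function.Injective a)
    (g : ℝ → ℝ) (hg : ContDiff ℝ n g) :
    ∫ x in {x : Fin n → ℝ | (∀ i, x i ∈ Set.Icc (0:ℝ) 1) ∧ ∀ i j : Fin n, i ≤ j → x j ≤ x i},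
        iteratedDeriv n g (a 0 + ∑ i : Fin n, (a i.succ - a i.castSucc) * x i)
      = ∑ i : Fin (n + 1), g (a i) / ∏ j ∈ Finset.univ.erase i, (a i - a j) :=
  statement13_general a ha g hg

end ChoquetPaper
end
end

section
/- Let y ∈ ℝ, let b_1,…,b_r be pairwise distinct reals with b_k < y for all k, and let c_1,…,c_s be pairwise distinct reals with c_l > y for all l (so all r+s numbers are pairwise distinct). For integers k, l with 1 ≤ k ≤ r and 1 ≤ l ≤ s define α_{k,l} := Δ[(·−y)_+^{k+l−2} : b_1,…,b_k,c_1,…,c_l], and set α_{0,l} := 0 and α_{k,0} := 0 for all k, l. Then α_{1,1} = 1/(c_1 − b_1), and for all (k,l) with 1 ≤ k ≤ r, 1 ≤ l ≤ s and (k,l) ≠ (1,1), α_{k,l} = ( (c_l − y)·α_{k−1,l} + (y − b_k)·α_{k,l−1} ) / (c_l − b_k). -/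
/-
Since `(t - y)_+^{m+1} = (t - y) (t - y)_+^m`, the Leibniz-type identity
`Δ[(· - y) g : S] = (a_i - y) Δ[g : S] + Δ[g : S ∖ {i}]`, used once with `a_i = b_k` and once
with `a_i = c_l`, gives two expressions for `α_{k,l}`; eliminating `Δ[g : S]` between them is the
recurrence. On the boundary, `α_{k,0}` vanishes because the truncated power is zero at the `b`'s,
and `α_{0,l}` because at the `c`'s it agrees with the polynomial `(t - y)^{l-2}`, whose degree is
too small for a divided difference at `l` points.
-/

open MeasureTheory ProbabilityTheory Finset

noncomputable section

namespace ChoquetPaper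

variable {n : ℕ} {Ω : Type*}

open Polynomial

section DividedDifference

variable {ι : Type*} [DecidableEq ι] {s : Finset ι} {a : ι → ℝ}

lemma ddiff_congr {g g' : ℝ → ℝ} (h : ∀ i ∈ s, g (a i) = g' (a i)) :
    ddiff g s a = ddiff g' s a :=
  sum_congr rfl fun i hi => by rw [h i hi]

lemma ddiff_map {κ : Type*} [DecidableEq κ] (g : ℝ → ℝ) (e : ι ↪ κ) (a : κ → ℝ) :
    ddiff g (s.map e) a = ddiff g s fun i => a (e i) := by
  simp only [ddiff, sum_map, ← map_erase, prod_map]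

lemma ddiff_pair (g : ℝ → ℝ) {i j : ι} (hij : i ≠ j) :
    ddiff g {i, j} a = g (a i) / (a i - a j) + g (a j) / (a j - a i) := by
  rw [ddiff, sum_pair hij, erase_insert (notMem_singleton.mpr hij), pair_comm,
    erase_insert (notMem_singleton.mpr hij.symm), prod_singleton, prod_singleton]

lemma ddiff_eval_eq_zero (ha : Set.InjOn a s) {p : ℝ[X]} (hp : p.natDegree + 1 < #s) :
    ddiff (fun t => p.eval t) s a = 0 := by
  have hdeg : p.degree < #s := degree_le_natDegree.trans_lt (by exact_mod_cast (by omega))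
  rw [ddiff, ← Lagrange.coeff_eq_sum ha hdeg]
  exact coeff_eq_zero_of_natDegree_lt (by omega)

/-- Splitting `t - y = (a i - y) + (t - a i)`, the second summand cancels the factor
`a i - a j` of each denominator with `j ≠ i` and kills the term of index `i`. -/
lemma ddiff_sub_mul (g : ℝ → ℝ) (y : ℝ) (ha : Set.InjOn a s) {i : ι} (hi : i ∈ s) :
    ddiff (fun t => (t - y) * g t) s a = (a i - y) * ddiff g s a + ddiff g (s.erase i) a := by
  have hsplit : ∀ j ∈ s, (a j - y) * g (a j) / ∏ k ∈ s.erase j, (a j - a k)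
      = (a i - y) * (g (a j) / ∏ k ∈ s.erase j, (a j - a k))
        + (a j - a i) * g (a j) / ∏ k ∈ s.erase j, (a j - a k) := fun j _ => by ring
  have hcancel : ∀ j ∈ s.erase i, (a j - a i) * g (a j) / ∏ k ∈ s.erase j, (a j - a k)
      = g (a j) / ∏ k ∈ (s.erase i).erase j, (a j - a k) := by
    intro j hj
    obtain ⟨hji, hj⟩ := mem_erase.mp hj
    have hne : a j - a i ≠ 0 := sub_ne_zero.mpr fun h => hji (ha hj hi h)
    rw [← mul_prod_erase _ _ (mem_erase.mpr ⟨Ne.symm hji, hi⟩), mul_div_mul_left _ _ hne,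
      erase_right_comm]
  have hdiag : (a i - a i) * g (a i) / ∏ k ∈ s.erase i, (a i - a k) = 0 := by simp
  rw [ddiff, sum_congr rfl hsplit, sum_add_distrib, ← mul_sum,
    ← sum_erase (f := fun j => (a j - a i) * g (a j) / ∏ k ∈ s.erase j, (a j - a k)) s hdiag,
    sum_congr rfl hcancel]
  rfl

lemma ddiff_sub_mul_eq_div (g : ℝ → ℝ) (y : ℝ) (ha : Set.InjOn a s) {i j : ι} (hi : i ∈ s)
    (hj : j ∈ s) (hij : i ≠ j) :
    ddiff (fun t => (t - y) * g t) s a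
      = ((a j - y) * ddiff g (s.erase i) a + (y - a i) * ddiff g (s.erase j) a) / (a j - a i) := by
  have hne : a j - a i ≠ 0 := sub_ne_zero.mpr fun h => hij (ha hi hj h.symm)
  rw [eq_div_iff hne]
  linear_combination (a j - y) * ddiff_sub_mul g y ha hi - (a i - y) * ddiff_sub_mul g y ha hj

end DividedDifference

lemma tpowPos_of_pos {t : ℝ} (ht : 0 < t) (m : ℕ) : tpowPos t m = t ^ m := if_pos ht

lemma tpowPos_of_nonpos {t : ℝ} (ht : t ≤ 0) (m : ℕ) : tpowPos t m = 0 := if_neg ht.not_gt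

lemma tpowPos_succ (t : ℝ) (m : ℕ) : tpowPos t (m + 1) = t * tpowPos t m := by
  rcases lt_or_ge 0 t with ht | ht
  · rw [tpowPos_of_pos ht, tpowPos_of_pos ht, pow_succ, mul_comm]
  · rw [tpowPos_of_nonpos ht, tpowPos_of_nonpos ht, mul_zero]

lemma disjSum_erase_inl {α β : Type*} [DecidableEq α] [DecidableEq β] (s : Finset α)
    (t : Finset β) (x : α) : (s.disjSum t).erase (Sum.inl x) = (s.erase x).disjSum t := by
  ext (z | z) <;> simp

lemma disjSum_erase_inr {α β : Type*} [DecidableEq α] [DecidableEq β] (s : Finset α)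
    (t : Finset β) (x : β) : (s.disjSum t).erase (Sum.inr x) = s.disjSum (t.erase x) := by
  ext (z | z) <;> simp

def initSeg (k : ℕ) : Finset (Fin n) := univ.filter fun i => (i : ℕ) < k

@[simp]
lemma mem_initSeg {k : ℕ} {i : Fin n} : i ∈ initSeg k ↔ (i : ℕ) < k := by simp [initSeg]

lemma initSeg_zero : (initSeg 0 : Finset (Fin n)) = ∅ := by ext; simp

lemma card_initSeg {k : ℕ} (hk : k ≤ n) : #(initSeg k : Finset (Fin n)) = k := by
  simp [initSeg, Fin.card_filter_val_lt, hk]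

lemma erase_initSeg_succ {k : ℕ} (hk : k < n) :
    (initSeg (k + 1)).erase (⟨k, hk⟩ : Fin n) = initSeg k := by
  ext i; simp [Fin.ext_iff]; omega

section DeBoorVarsi

variable {r s : ℕ} (b : Fin r → ℝ) (c : Fin s → ℝ) (y : ℝ)

/-- `Δ[(· - y)_+^m : b_0, …, b_{k-1}, c_0, …, c_{l-1}]`; the paper's `α_{k,l}` is the case
`m = k + l - 2`. -/
def ddiffTpow (m k l : ℕ) : ℝ :=
  ddiff (fun t => tpowPos (t - y) m) ((initSeg k).disjSum (initSeg l)) (Sum.elim b c)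

lemma ddiffTpow_zero_right (hby : ∀ k, b k < y) (m k : ℕ) : ddiffTpow b c y m k 0 = 0 := by
  rw [ddiffTpow, initSeg_zero, disjSum_empty, ddiff_map]
  simp only [Function.Embedding.inl_apply, Sum.elim_inl]
  exact sum_eq_zero fun i _ => by
    simp only [tpowPos_of_nonpos (sub_nonpos.mpr (hby i).le), zero_div]

lemma ddiffTpow_zero_left (hc : Function.Injective c) (hcy : ∀ l, y < c l) {m l : ℕ}
    (hl : l ≤ s) (hml : m + 2 ≤ l) : ddiffTpow b c y m 0 l = 0 := by
  rw [ddiffTpow, initSeg_zero, empty_disjSum, ddiff_map]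
  simp only [Function.Embedding.inr_apply, Sum.elim_inr]
  have hpoly : ∀ j ∈ initSeg l, tpowPos (c j - y) m = ((X - C y) ^ m).eval (c j) := fun j _ => by
    rw [tpowPos_of_pos (sub_pos.mpr (hcy j)), eval_pow, eval_sub, eval_X, eval_C]
  rw [ddiff_congr (g' := fun t => ((X - C y) ^ m).eval t) hpoly]
  refine ddiff_eval_eq_zero hc.injOn ?_
  rw [natDegree_pow, natDegree_sub_C, natDegree_X, mul_one, card_initSeg hl]
  omega

lemma ddiffTpow_succ_succ (hbc : Function.Injective (Sum.elim b c)) {m k l : ℕ} (hk : k < r)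
    (hl : l < s) :
    ddiffTpow b c y (m + 1) (k + 1) (l + 1)
      = ((c ⟨l, hl⟩ - y) * ddiffTpow b c y m k (l + 1)
          + (y - b ⟨k, hk⟩) * ddiffTpow b c y m (k + 1) l) / (c ⟨l, hl⟩ - b ⟨k, hk⟩) := by
  simp only [ddiffTpow, tpowPos_succ]
  rw [ddiff_sub_mul_eq_div _ y hbc.injOn (i := Sum.inl ⟨k, hk⟩) (j := Sum.inr ⟨l, hl⟩)
    (by simp) (by simp) Sum.inl_ne_inr, disjSum_erase_inl, disjSum_erase_inr,
    erase_initSeg_succ, erase_initSeg_succ, Sum.elim_inl, Sum.elim_inr]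

lemma ddiffTpow_zero_one_one (hr : 0 < r) (hs : 0 < s) (hb : b ⟨0, hr⟩ < y)
    (hc : y < c ⟨0, hs⟩) : ddiffTpow b c y 0 1 1 = 1 / (c ⟨0, hs⟩ - b ⟨0, hr⟩) := by
  have hpair : (initSeg 1 : Finset (Fin r)).disjSum (initSeg 1 : Finset (Fin s))
      = {Sum.inl ⟨0, hr⟩, Sum.inr ⟨0, hs⟩} := by
    ext (i | i) <;> simp [Fin.ext_iff]
  rw [ddiffTpow, hpair, ddiff_pair _ Sum.inl_ne_inr, Sum.elim_inl, Sum.elim_inr,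
    tpowPos_of_nonpos (by linarith), tpowPos_of_pos (by linarith), pow_zero, zero_div, zero_add]

end DeBoorVarsi

/-- the de Boor–Varsi recurrence for divided differences of plus truncated power
functions. -/
theorem statement18 (r s : ℕ) (hr : 1 ≤ r) (hs : 1 ≤ s) (y : ℝ)
    (b : Fin r → ℝ) (c : Fin s → ℝ)
    (hb : Function.Injective b) (hc : Function.Injective c)
    (hby : ∀ k, b k < y) (hcy : ∀ l, y < c l)
    (α : ℕ → ℕ → ℝ)
    (hα1 : ∀ l, α 0 l = 0) (hα2 : ∀ k, α k 0 = 0)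
    (hα : ∀ k l : ℕ, 1 ≤ k → k ≤ r → 1 ≤ l → l ≤ s →
      α k l = ddiff (fun t => tpowPos (t - y) (k + l - 2))
        ((Finset.univ.filter (fun i : Fin r => (i : ℕ) < k)).disjSum
          (Finset.univ.filter (fun j : Fin s => (j : ℕ) < l)))
        (Sum.elim b c)) :
    α 1 1 = 1 / (c ⟨0, hs⟩ - b ⟨0, hr⟩) ∧
      ∀ (k l : ℕ) (hk1 : 1 ≤ k) (hk2 : k ≤ r) (hl1 : 1 ≤ l) (hl2 : l ≤ s), ¬(k = 1 ∧ l = 1) →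
        α k l = ((c ⟨l - 1, by omega⟩ - y) * α (k - 1) l +
            (y - b ⟨k - 1, by omega⟩) * α k (l - 1)) /
          (c ⟨l - 1, by omega⟩ - b ⟨k - 1, by omega⟩) := by
  have hα' : ∀ k l, 1 ≤ k → k ≤ r → 1 ≤ l → l ≤ s → α k l = ddiffTpow b c y (k + l - 2) k l := hα
  refine ⟨(hα' 1 1 le_rfl hr le_rfl hs).trans (ddiffTpow_zero_one_one b c y hr hs (hby _) (hcy _)),
    fun k l hk1 hk2 hl1 hl2 hkl => ?_⟩
  obtain ⟨k, rfl⟩ : ∃ k', k = k' + 1 := ⟨k - 1, by omega⟩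
  obtain ⟨l, rfl⟩ : ∃ l', l = l' + 1 := ⟨l - 1, by omega⟩
  obtain ⟨m, hm⟩ : ∃ m, k + l = m + 1 := ⟨k + l - 1, by omega⟩
  have hleft : ddiffTpow b c y m k (l + 1) = α k (l + 1) := by
    rcases Nat.eq_zero_or_pos k with rfl | hk
    · rw [hα1, ddiffTpow_zero_left b c y hc hcy hl2 (by omega)]
    · rw [hα' k (l + 1) hk (by omega) (by omega) hl2]
      congr 1
      omega
  have hright : ddiffTpow b c y m (k + 1) l = α (k + 1) l := by
    rcases Nat.eq_zero_or_pos l with rfl | hl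
    · rw [hα2, ddiffTpow_zero_right b c y hby]
    · rw [hα' (k + 1) l (by omega) hk2 hl (by omega)]
      congr 1
      omega
  have hbc : Function.Injective (Sum.elim b c) :=
    hb.sumElim hc fun i j => ((hby i).trans (hcy j)).ne
  simp only [Nat.add_sub_cancel]
  rw [hα' _ _ hk1 hk2 hl1 hl2, show k + 1 + (l + 1) - 2 = m + 1 by omega,
    ddiffTpow_succ_succ b c y hbc, hleft, hright]

end ChoquetPaper
end
end
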